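/- Extend the previous lattice by an orthogonal class σ with σ² = −6: L' = L ⊕ Zσ. The element β = ((−4, −4, 52), σ) satisfies <β, L'> = 4Z + 6Z = 2Z, hence the divisibility of β in L' equals 2. -/
import Mathlib

/-- Extended pairing on `L' = L ⊕ ℤσ`, where `L = {(r, r, s)}` carries the
Mukai pairing (`h² = 2`) and `σ` is orthogonal with `σ² = −6`. -/
def mukaiPairing4 (v w : ℤ × ℤ × ℤ × ℤ) : ℤ :=
  2 * v.2.1 * w.2.1 - v.1 * w.2.2.1 - w.1 * v.2.2.1 - 6 * v.2.2.2 * w.2.2.2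

/-- The element `β = ((−4, −4, 52), σ)` pairs with `L' = L ⊕ ℤσ` to exactly
`4ℤ + 6ℤ = 2ℤ`, hence has divisibility `2`. -/
theorem divisibility_of_B1 :
    ∀ n : ℤ, (∃ r s k : ℤ, mukaiPairing4 (-4, -4, 52, 1) (r, r, s, k) = n) ↔ (2 : ℤ) ∣ n := by
  intro n
  constructor
  · rintro ⟨r, s, k, h⟩
    simp only [mukaiPairing4] at h
    exact ⟨-30 * r + 2 * s - 3 * k, by omega⟩
  · rintro ⟨m, rfl⟩
    exact ⟨0, 2 * m, m, by simp [mukaiPairing4]; ring⟩
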